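/- Let M be a pointed metric space and let Y be a real Banach space such that SA_K(M, Y) is dense in Lipc(M, Y). Then for every compact Hausdorff topological space K, SA_K(M, C(K, Y)) is dense in Lipc(M, C(K, Y)), where C(K, Y) is the Banach space of continuous functions from K to Y with the supremum norm. -/
import Mathlib


open Set Metric NNReal MeasureTheory

/-- A Lipschitz map vanishing at the base point `z`, i.e. an element of `Lip₀(M,Y)`. -/
def IsLip0 {M Y : Type*} [MetricSpace M] [NormedAddCommGroup Y]
    (z : M) (F : M → Y) : Prop :=
  (∃ K : ℝ≥0, LipschitzWith K F) ∧ F z = 0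

/-- The Lipschitz norm `‖F‖_L = sup {‖F p - F q‖ / d(p,q) : p ≠ q}`. -/
noncomputable def lipNorm {M Y : Type*} [MetricSpace M] [NormedAddCommGroup Y]
    (F : M → Y) : ℝ :=
  sSup {r : ℝ | ∃ p q : M, p ≠ q ∧ r = ‖F p - F q‖ / dist p q}

/-- `F` strongly attains its norm. -/
def StronglyAttains {M Y : Type*} [MetricSpace M] [NormedAddCommGroup Y]
    (F : M → Y) : Prop :=
  ∃ p q : M, p ≠ q ∧ ‖F p - F q‖ = lipNorm F * dist p q

/-- `F` is Lipschitz compact: its Lipschitz image is relatively compact. -/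
def IsLipCompact {M Y : Type*} [MetricSpace M] [NormedAddCommGroup Y] [NormedSpace ℝ Y]
    (F : M → Y) : Prop :=
  IsCompact (closure {y : Y | ∃ p q : M, p ≠ q ∧ y = (dist p q)⁻¹ • (F p - F q)})

/-- The pair `(M,Y)` has the Lip-BPB property witnessed by the function `η`. -/
def LipBPBWith (M : Type*) [MetricSpace M] (z : M)
    (Y : Type*) [NormedAddCommGroup Y] (η : ℝ → ℝ) : Prop :=
  (∀ ε > 0, η ε > 0) ∧
  ∀ ε > 0, ∀ F : M → Y, IsLip0 z F → lipNorm F = 1 →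
    ∀ p q : M, p ≠ q → ‖F p - F q‖ > (1 - η ε) * dist p q →
      ∃ G : M → Y, IsLip0 z G ∧ ∃ r s : M, r ≠ s ∧
        ‖G r - G s‖ = dist r s ∧ lipNorm G = 1 ∧
        lipNorm (fun x => G x - F x) < ε ∧
        (dist p r + dist q s) / dist p q < ε

/-- The pair `(M,Y)` has the Lip-BPB property. -/
def LipBPB (M : Type*) [MetricSpace M] (z : M)
    (Y : Type*) [NormedAddCommGroup Y] : Prop :=
  ∃ η : ℝ → ℝ, LipBPBWith M z Y η

/-- The pair `(M,Y)` has the Lip-BPB property for Lipschitz compact maps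
witnessed by the function `η`. -/
def LipBPBCompactWith (M : Type*) [MetricSpace M] (z : M)
    (Y : Type*) [NormedAddCommGroup Y] [NormedSpace ℝ Y] (η : ℝ → ℝ) : Prop :=
  (∀ ε > 0, η ε > 0) ∧
  ∀ ε > 0, ∀ F : M → Y, IsLip0 z F → IsLipCompact F → lipNorm F = 1 →
    ∀ p q : M, p ≠ q → ‖F p - F q‖ > (1 - η ε) * dist p q →
      ∃ G : M → Y, IsLip0 z G ∧ IsLipCompact G ∧ ∃ r s : M, r ≠ s ∧
        ‖G r - G s‖ = dist r s ∧ lipNorm G = 1 ∧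
        lipNorm (fun x => G x - F x) < ε ∧
        (dist p r + dist q s) / dist p q < ε

/-- The pair `(M,Y)` has the Lip-BPB property for Lipschitz compact maps. -/
def LipBPBCompact (M : Type*) [MetricSpace M] (z : M)
    (Y : Type*) [NormedAddCommGroup Y] [NormedSpace ℝ Y] : Prop :=
  ∃ η : ℝ → ℝ, LipBPBCompactWith M z Y η

/-- `SA(M,Y)` is dense in `Lip₀(M,Y)`. -/
def SADense (M : Type*) [MetricSpace M] (z : M)
    (Y : Type*) [NormedAddCommGroup Y] : Prop :=
  ∀ F : M → Y, IsLip0 z F → ∀ ε > 0,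
    ∃ G : M → Y, IsLip0 z G ∧ StronglyAttains G ∧ lipNorm (fun x => G x - F x) < ε

/-- `SA_K(M,Y)` is dense in `Lipc(M,Y)`. -/
def SAKDense (M : Type*) [MetricSpace M] (z : M)
    (Y : Type*) [NormedAddCommGroup Y] [NormedSpace ℝ Y] : Prop :=
  ∀ F : M → Y, IsLip0 z F → IsLipCompact F → ∀ ε > 0,
    ∃ G : M → Y, IsLip0 z G ∧ IsLipCompact G ∧ StronglyAttains G ∧
      lipNorm (fun x => G x - F x) < ε

section Helpers

variable {M Y : Type*} [MetricSpace M] [NormedAddCommGroup Y]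

lemma lipNorm_nonneg (F : M → Y) : 0 ≤ lipNorm F :=
  Real.sSup_nonneg (by rintro r ⟨p, q, hpq, rfl⟩; positivity)

lemma lipNorm_le {F : M → Y} {C : ℝ} (hC : 0 ≤ C)
    (hle : ∀ p q : M, p ≠ q → ‖F p - F q‖ ≤ C * dist p q) : lipNorm F ≤ C := by
  refine Real.sSup_le ?_ hC
  rintro r ⟨p, q, hpq, rfl⟩
  rw [div_le_iff₀ (dist_pos.2 hpq)]
  exact hle p q hpq

lemma bddAbove_slopes {F : M → Y} {C : ℝ≥0} (h : LipschitzWith C F) :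
    BddAbove {r : ℝ | ∃ p q : M, p ≠ q ∧ r = ‖F p - F q‖ / dist p q} := by
  refine ⟨C, ?_⟩
  rintro r ⟨p, q, hpq, rfl⟩
  rw [div_le_iff₀ (dist_pos.2 hpq)]
  simpa [dist_eq_norm] using h.dist_le_mul p q

lemma lipNorm_ge_slope {F : M → Y} {C : ℝ≥0} (h : LipschitzWith C F) {p q : M} (hpq : p ≠ q) :
    ‖F p - F q‖ / dist p q ≤ lipNorm F :=
  le_csSup (bddAbove_slopes h) ⟨p, q, hpq, rfl⟩

lemma slope_le_lipNorm {F : M → Y} {C : ℝ≥0} (h : LipschitzWith C F) (p q : M) :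
    ‖F p - F q‖ ≤ lipNorm F * dist p q := by
  rcases eq_or_ne p q with rfl | hpq
  · simp
  · have h1 := lipNorm_ge_slope h hpq
    have hd : (0 : ℝ) < dist p q := dist_pos.2 hpq
    calc ‖F p - F q‖ = ‖F p - F q‖ / dist p q * dist p q := by field_simp
      _ ≤ lipNorm F * dist p q := mul_le_mul_of_nonneg_right h1 hd.le

lemma exists_nhd_slopes {K : Type*} [TopologicalSpace K] [CompactSpace K]
    {S : Set C(K, Y)} (hS : TotallyBounded S) (t0 : K) {δ : ℝ} (hδ : 0 < δ) :
    ∃ U : Set K, IsOpen U ∧ t0 ∈ U ∧ ∀ f ∈ S, ∀ t ∈ U, dist (f t) (f t0) < δ := by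
  obtain ⟨T, hTfin, hTsub⟩ := Metric.totallyBounded_iff.1 hS (δ / 3) (by linarith)
  refine ⟨⋂ g ∈ T, {t | dist (g t) (g t0) < δ / 3}, ?_, ?_, ?_⟩
  · exact hTfin.isOpen_biInter fun g _ =>
      isOpen_lt (g.continuous.dist continuous_const) continuous_const
  · refine mem_iInter₂.2 fun g _ => ?_
    simp only [mem_setOf_eq, dist_self]
    linarith
  · intro f hf t ht
    obtain ⟨g, hgT, hfg⟩ : ∃ g ∈ T, f ∈ Metric.ball g (δ / 3) := by
      simpa using hTsub hf
    rw [Metric.mem_ball] at hfg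
    have h1 : dist (f t) (g t) ≤ dist f g := ContinuousMap.dist_apply_le_dist t
    have h2 : dist (f t0) (g t0) ≤ dist f g := ContinuousMap.dist_apply_le_dist t0
    have h3 : dist (g t) (g t0) < δ / 3 := by
      simpa using mem_iInter₂.1 ht g hgT
    calc dist (f t) (f t0)
        ≤ dist (f t) (g t) + dist (g t) (g t0) + dist (g t0) (f t0) := dist_triangle4 _ _ _ _
      _ < δ := by rw [dist_comm (g t0) (f t0)]; linarith

end Helpers

/-- If `SA_K(M, Y)` is dense in `Lipc(M, Y)`, then for every compact Hausdorff space `K`,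
`SA_K(M, C(K, Y))` is dense in `Lipc(M, C(K, Y))`. -/
theorem saKDense_continuousMap {M Y : Type*} [MetricSpace M] [CompleteSpace M]
    [NormedAddCommGroup Y] [NormedSpace ℝ Y] [CompleteSpace Y]
    (z : M) (h : SAKDense M z Y)
    (K : Type*) [TopologicalSpace K] [CompactSpace K] [T2Space K] :
    SAKDense M z C(K, Y) := by
  intro F hF0 hFc ε hε
  -- M has two distinct points, else `h` is contradictory
  obtain ⟨p0, q0, hpq0⟩ : ∃ p q : M, p ≠ q := by
    by_contra hM
    push_neg at hM
    have hLc : IsLipCompact (fun _ : M => (0 : Y)) := by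
      have : {y : Y | ∃ p q : M, p ≠ q ∧
          y = (dist p q)⁻¹ • ((fun _ : M => (0 : Y)) p - (fun _ : M => (0 : Y)) q)} = ∅ := by
        ext y
        simp only [mem_setOf_eq, mem_empty_iff_false, iff_false, not_exists]
        intro p q ⟨hpq, _⟩
        exact hpq (hM p q)
      rw [IsLipCompact, this, closure_empty]
      exact isCompact_empty
    obtain ⟨G, _, _, ⟨p, q, hpq, _⟩, _⟩ :=
      h (fun _ => 0) ⟨⟨0, LipschitzWith.const 0⟩, rfl⟩ hLc 1 one_pos
    exact hpq (hM p q)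
  obtain ⟨⟨CF, hCF⟩, hFz⟩ := hF0
  set L : ℝ := lipNorm F with hLdef
  have hL0 : 0 ≤ L := lipNorm_nonneg F
  rcases eq_or_lt_of_le hL0 with hL | hLpos
  · -- lipNorm F = 0 : F itself works
    refine ⟨F, ⟨⟨CF, hCF⟩, hFz⟩, hFc, ⟨p0, q0, hpq0, ?_⟩, ?_⟩
    · have h1 : ‖F p0 - F q0‖ ≤ L * dist p0 q0 := slope_le_lipNorm hCF p0 q0
      rw [← hL] at h1
      simp only [zero_mul] at h1
      have h2 : ‖F p0 - F q0‖ = 0 := le_antisymm h1 (norm_nonneg _)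
      rw [h2, ← hLdef, ← hL, zero_mul]
    · have : lipNorm (fun x => F x - F x) ≤ 0 :=
        lipNorm_le le_rfl (fun p q _ => by simp)
      linarith
  · -- main case : 0 < L
    set δ : ℝ := min (ε / 5) (L / 3) with hδdef
    have hδpos : 0 < δ := lt_min (by linarith) (by linarith)
    have hδε : δ ≤ ε / 5 := min_le_left _ _
    have hδL : δ ≤ L / 3 := min_le_right _ _
    -- the slope set of F
    set S : Set C(K, Y) :=
      {y | ∃ p q : M, p ≠ q ∧ y = (dist p q)⁻¹ • (F p - F q)} with hSdef
    have hS_tb : TotallyBounded S := hFc.totallyBounded.subset subset_closure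
    -- a slope close to the norm
    obtain ⟨rr, ⟨p1, q1, hpq1, hrr⟩, hr⟩ :
        ∃ rr ∈ {r : ℝ | ∃ p q : M, p ≠ q ∧ r = ‖F p - F q‖ / dist p q}, L - δ < rr :=
      exists_lt_of_lt_csSup ⟨_, ⟨p0, q0, hpq0, rfl⟩⟩ (by change L - δ < lipNorm F; linarith)
    subst hrr
    have hd1 : (0 : ℝ) < dist p1 q1 := dist_pos.2 hpq1
    have hr' : (L - δ) * dist p1 q1 < ‖F p1 - F q1‖ := by
      rw [lt_div_iff₀ hd1] at hr
      exact hr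
    -- a point t0 where the norm is nearly attained
    obtain ⟨t0, ht0⟩ : ∃ t0 : K, (L - δ) * dist p1 q1 < ‖F p1 t0 - F q1 t0‖ := by
      by_contra hK
      push_neg at hK
      have : ‖F p1 - F q1‖ ≤ (L - δ) * dist p1 q1 := by
        refine (ContinuousMap.norm_le _ (by nlinarith)).2 fun t => ?_
        simpa [ContinuousMap.sub_apply] using hK t
      linarith
    -- F evaluated at t0
    set F0 : M → Y := fun x => F x t0 with hF0def
    have hF0app : ∀ x, F0 x = F x t0 := fun x => rfl
    have hF0lip : LipschitzWith CF F0 := LipschitzWith.of_dist_le_mul fun p q =>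
      le_trans (ContinuousMap.dist_apply_le_dist t0) (hCF.dist_le_mul p q)
    have hF00 : IsLip0 z F0 := by
      refine ⟨⟨CF, hF0lip⟩, ?_⟩
      rw [hF0app, hFz]
      rfl
    have hF0c : IsLipCompact F0 := by
      have himg : IsCompact ((fun g : C(K, Y) => g t0) '' closure S) :=
        hFc.image (continuous_eval_const t0)
      have hsub : {y : Y | ∃ p q : M, p ≠ q ∧ y = (dist p q)⁻¹ • (F0 p - F0 q)}
          ⊆ (fun g : C(K, Y) => g t0) '' closure S := by
        rintro y ⟨p, q, hpq, rfl⟩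
        refine ⟨(dist p q)⁻¹ • (F p - F q), subset_closure ⟨p, q, hpq, rfl⟩, ?_⟩
        simp [ContinuousMap.smul_apply, ContinuousMap.sub_apply, hF0app]
      exact himg.of_isClosed_subset isClosed_closure
        (closure_minimal hsub himg.isClosed)
    have hF0L : L - δ < lipNorm F0 := by
      have h1 : L - δ < ‖F0 p1 - F0 q1‖ / dist p1 q1 := by
        rw [lt_div_iff₀ hd1, hF0app, hF0app]
        exact ht0
      exact lt_of_lt_of_le h1 (lipNorm_ge_slope hF0lip hpq1)
    -- apply the hypothesis to F0
    obtain ⟨G0, hG00, hG0c, ⟨r, s, hrs, hatt⟩, hclose⟩ := h F0 hF00 hF0c δ hδpos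
    obtain ⟨⟨CG, hCG⟩, hG0z⟩ := hG00
    set A : ℝ := lipNorm G0 with hAdef
    have hdrs : (0 : ℝ) < dist r s := dist_pos.2 hrs
    -- the difference G0 - F0
    have hDlip : LipschitzWith (CG + CF) (fun x => G0 x - F0 x) := hCG.sub hF0lip
    have hDle : ∀ p q : M, ‖(G0 p - F0 p) - (G0 q - F0 q)‖ ≤ δ * dist p q := fun p q =>
      le_trans (slope_le_lipNorm hDlip p q)
        (mul_le_mul_of_nonneg_right hclose.le dist_nonneg)
    -- lower bound for A
    have hA_lb : L - 2 * δ < A := by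
      have e3 : F0 p1 - F0 q1
          = (G0 p1 - G0 q1) - ((G0 p1 - F0 p1) - (G0 q1 - F0 q1)) := by abel
      have e4 : ‖F0 p1 - F0 q1‖ ≤ ‖G0 p1 - G0 q1‖ + ‖(G0 p1 - F0 p1) - (G0 q1 - F0 q1)‖ := by
        rw [e3]; exact norm_sub_le _ _
      have e5 : (L - 2 * δ) * dist p1 q1 < ‖G0 p1 - G0 q1‖ := by
        have := hDle p1 q1
        have hF01 : (L - δ) * dist p1 q1 < ‖F0 p1 - F0 q1‖ := by
          rw [hF0app, hF0app]; exact ht0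
        linarith
      have e6 : L - 2 * δ < ‖G0 p1 - G0 q1‖ / dist p1 q1 := by
        rw [lt_div_iff₀ hd1]; exact e5
      exact lt_of_lt_of_le e6 (lipNorm_ge_slope hCG hpq1)
    have hA_pos : 0 < A := by linarith
    have hA2 : 0 < A + 2 * δ := by linarith
    set θ : ℝ := A / (A + 2 * δ) with hθdef
    have hθpos : 0 < θ := div_pos hA_pos hA2
    have hθ1 : θ ≤ 1 := (div_le_one hA2).2 (by linarith)
    have hθA : θ * (A + 2 * δ) = A := div_mul_cancel₀ A hA2.ne'
    have hLA : L ≤ A + 2 * δ := by linarith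
    have hθL : θ * L ≤ A := by
      have h2 := mul_le_mul_of_nonneg_left hLA hθpos.le
      rwa [hθA] at h2
    have hθL' : (1 - θ) * L ≤ 2 * δ := by
      have h1θ : (0:ℝ) ≤ 1 - θ := by linarith
      have h2 := mul_le_mul_of_nonneg_left hLA h1θ
      have h3 : (1 - θ) * (A + 2 * δ) = 2 * δ := by
        rw [sub_mul, one_mul, hθA]; ring
      linarith
    -- F slope bounds
    have hFL : ∀ p q : M, ∀ t : K, ‖F p t - F q t‖ ≤ L * dist p q := by
      intro p q t
      have h1 : ‖(F p - F q) t‖ ≤ ‖F p - F q‖ := ContinuousMap.norm_coe_le_norm _ t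
      rw [ContinuousMap.sub_apply] at h1
      exact le_trans h1 (slope_le_lipNorm hCF p q)
    have hFCF : ∀ p q : M, ∀ t : K, ‖F p t - F q t‖ ≤ (CF : ℝ) * dist p q := by
      intro p q t
      have h1 : ‖(F p - F q) t‖ ≤ ‖F p - F q‖ := ContinuousMap.norm_coe_le_norm _ t
      rw [ContinuousMap.sub_apply] at h1
      refine le_trans h1 ?_
      have := hCF.dist_le_mul p q
      rwa [dist_eq_norm] at this
    have hG0CG : ∀ p q : M, ‖G0 p - G0 q‖ ≤ (CG : ℝ) * dist p q := by
      intro p q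
      have := hCG.dist_le_mul p q
      rwa [dist_eq_norm] at this
    -- equicontinuity neighbourhood
    obtain ⟨U, hUopen, ht0U, hU⟩ := exists_nhd_slopes hS_tb t0 hδpos
    have hU' : ∀ p q : M, p ≠ q → ∀ t ∈ U,
        ‖(F p t - F q t) - (F p t0 - F q t0)‖ ≤ δ * dist p q := by
      intro p q hpq t ht
      have hd : (0 : ℝ) < dist p q := dist_pos.2 hpq
      have hmem : (dist p q)⁻¹ • (F p - F q) ∈ S := ⟨p, q, hpq, rfl⟩
      have h1 := hU _ hmem t ht
      rw [dist_eq_norm] at h1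
      have h2 : ((dist p q)⁻¹ • (F p - F q)) t - ((dist p q)⁻¹ • (F p - F q)) t0
          = (dist p q)⁻¹ • ((F p t - F q t) - (F p t0 - F q t0)) := by
        simp [ContinuousMap.smul_apply, ContinuousMap.sub_apply, smul_sub]
      rw [h2, norm_smul_of_nonneg (by positivity)] at h1
      have h3 : (dist p q)⁻¹ * ‖(F p t - F q t) - (F p t0 - F q t0)‖ ≤ δ := h1.le
      have h4 := mul_le_mul_of_nonneg_left h3 hd.le
      rw [← mul_assoc, mul_inv_cancel₀ hd.ne', one_mul] at h4
      linarith
    -- Urysohn function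
    obtain ⟨ψ, hψ0, hψ1, hψ01⟩ :=
      exists_continuous_zero_one_of_isClosed (X := K) hUopen.isClosed_compl (isClosed_singleton (x := t0))
        (Set.disjoint_singleton_right.2 (by simp [ht0U]))
    have hψt0 : ψ t0 = 1 := by simpa using hψ1 rfl
    have hψU : ∀ t, t ∉ U → ψ t = 0 := fun t ht => by simpa using hψ0 ht
    have hψrange : ∀ t, 0 ≤ ψ t ∧ ψ t ≤ 1 := fun t => ⟨(hψ01 t).1, (hψ01 t).2⟩
    -- the new map G
    set G : M → C(K, Y) := fun x =>
      ContinuousMap.mk (fun t => (1 - ψ t) • (θ • F x t) + ψ t • G0 x)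
        (((continuous_const.sub ψ.continuous).smul ((F x).continuous.const_smul θ)).add
          (ψ.continuous.smul continuous_const)) with hGdef
    have hGapp : ∀ x t, G x t = (1 - ψ t) • (θ • F x t) + ψ t • G0 x := fun x t => rfl
    have hGsub : ∀ p q : M, ∀ t : K,
        G p t - G q t = (1 - ψ t) • (θ • (F p t - F q t)) + ψ t • (G0 p - G0 q) := by
      intro p q t
      rw [hGapp, hGapp]
      module
    -- key slope bound
    have hkey : ∀ p q : M, p ≠ q → ∀ t : K, ‖G p t - G q t‖ ≤ A * dist p q := by
      intro p q hpq t
      have hψt := hψrange t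
      rw [hGsub]
      have h1 : ‖(1 - ψ t) • (θ • (F p t - F q t))‖
          = (1 - ψ t) * (θ * ‖F p t - F q t‖) := by
        rw [norm_smul_of_nonneg (by linarith [hψt.2]), norm_smul_of_nonneg hθpos.le]
      have h2 : ‖ψ t • (G0 p - G0 q)‖ = ψ t * ‖G0 p - G0 q‖ :=
        norm_smul_of_nonneg hψt.1 _
      have hG0pq : ‖G0 p - G0 q‖ ≤ A * dist p q := slope_le_lipNorm hCG p q
      refine le_trans (norm_add_le _ _) ?_
      rw [h1, h2]
      by_cases htU : t ∈ U
      · have e2 : ‖F p t0 - F q t0‖ ≤ (A + δ) * dist p q := by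
          have e3 : F p t0 - F q t0
              = (G0 p - G0 q) - ((G0 p - F0 p) - (G0 q - F0 q)) := by
            rw [hF0app, hF0app]; abel
          rw [e3]
          refine le_trans (norm_sub_le _ _) ?_
          have := hDle p q
          linarith [hG0pq]
        have hFt : ‖F p t - F q t‖ ≤ (A + 2 * δ) * dist p q := by
          have e1 := hU' p q hpq t htU
          have e4 : F p t - F q t
              = (F p t0 - F q t0) + ((F p t - F q t) - (F p t0 - F q t0)) := by abel
          have e5 : ‖F p t - F q t‖
              ≤ ‖F p t0 - F q t0‖ + ‖(F p t - F q t) - (F p t0 - F q t0)‖ := by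
            have := norm_add_le (F p t0 - F q t0)
              ((F p t - F q t) - (F p t0 - F q t0))
            rwa [← e4] at this
          linarith
        have t1 : θ * ‖F p t - F q t‖ ≤ A * dist p q := by
          calc θ * ‖F p t - F q t‖ ≤ θ * ((A + 2 * δ) * dist p q) :=
                mul_le_mul_of_nonneg_left hFt hθpos.le
            _ = A * dist p q := by rw [← mul_assoc, hθA]
        have m1 := mul_le_mul_of_nonneg_left t1 (by linarith [hψt.2] : (0:ℝ) ≤ 1 - ψ t)
        have m2 := mul_le_mul_of_nonneg_left hG0pq hψt.1
        have m3 : (1 - ψ t) * (A * dist p q) + ψ t * (A * dist p q) = A * dist p q := by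
          ring
        linarith
      · have ha0 : ψ t = 0 := hψU t htU
        have hFt : ‖F p t - F q t‖ ≤ L * dist p q := hFL p q t
        have t1 : θ * ‖F p t - F q t‖ ≤ θ * (L * dist p q) :=
          mul_le_mul_of_nonneg_left hFt hθpos.le
        have t2 : θ * (L * dist p q) ≤ A * dist p q := by
          rw [← mul_assoc]
          exact mul_le_mul_of_nonneg_right hθL dist_nonneg
        have m3 : (1 - (0:ℝ)) * (θ * ‖F p t - F q t‖) + 0 * ‖G0 p - G0 q‖
            = θ * ‖F p t - F q t‖ := by ring
        rw [ha0, m3]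
        linarith
    have hGnormle : ∀ p q : M, p ≠ q → ‖G p - G q‖ ≤ A * dist p q := by
      intro p q hpq
      refine (ContinuousMap.norm_le _ (mul_nonneg hA_pos.le dist_nonneg)).2 fun t => ?_
      rw [ContinuousMap.sub_apply]
      exact hkey p q hpq t
    -- G is Lipschitz
    have hGlip : LipschitzWith (CF + CG) G := by
      refine LipschitzWith.of_dist_le_mul fun p q => ?_
      refine (ContinuousMap.dist_le (by positivity)).2 fun t => ?_
      rw [dist_eq_norm, hGsub]
      have hψt := hψrange t
      have h1 : ‖(1 - ψ t) • (θ • (F p t - F q t))‖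
          = (1 - ψ t) * (θ * ‖F p t - F q t‖) := by
        rw [norm_smul_of_nonneg (by linarith [hψt.2]), norm_smul_of_nonneg hθpos.le]
      have h2 : ‖ψ t • (G0 p - G0 q)‖ = ψ t * ‖G0 p - G0 q‖ :=
        norm_smul_of_nonneg hψt.1 _
      refine le_trans (norm_add_le _ _) ?_
      rw [h1, h2]
      push_cast
      have b1 : (1 - ψ t) * (θ * ‖F p t - F q t‖) ≤ θ * ‖F p t - F q t‖ :=
        mul_le_of_le_one_left (mul_nonneg hθpos.le (norm_nonneg _)) (by linarith [hψt.1])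
      have b2 : θ * ‖F p t - F q t‖ ≤ ‖F p t - F q t‖ :=
        mul_le_of_le_one_left (norm_nonneg _) hθ1
      have b3 : ψ t * ‖G0 p - G0 q‖ ≤ ‖G0 p - G0 q‖ :=
        mul_le_of_le_one_left (norm_nonneg _) hψt.2
      linarith [hFCF p q t, hG0CG p q]
    -- G vanishes at z
    have hGz : G z = 0 := by
      ext t
      rw [hGapp]
      have hFzt : F z t = 0 := by rw [hFz]; rfl
      rw [hFzt, hG0z]
      simp
    -- strong attainment
    have hGt0 : ∀ x, G x t0 = G0 x := by
      intro x
      rw [hGapp, hψt0]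
      simp
    have hGrs_ge : A * dist r s ≤ ‖G r - G s‖ := by
      have h1 : ‖(G r - G s) t0‖ ≤ ‖G r - G s‖ := ContinuousMap.norm_coe_le_norm _ t0
      rw [ContinuousMap.sub_apply, hGt0, hGt0] at h1
      rw [← hatt]
      exact h1
    have hGrs : ‖G r - G s‖ = A * dist r s :=
      le_antisymm (hGnormle r s hrs) hGrs_ge
    have hAleG : A ≤ lipNorm G := by
      have h1 := lipNorm_ge_slope hGlip hrs
      rw [hGrs, mul_div_assoc, div_self hdrs.ne', mul_one] at h1
      exact h1
    have hGnorm : lipNorm G = A := le_antisymm (lipNorm_le hA_pos.le hGnormle) hAleG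
    -- Lipschitz compactness of G
    have hGc : IsLipCompact G := by
      set Φ : C(K, Y) × Y → C(K, Y) := fun uy =>
        ContinuousMap.mk (fun t => (1 - ψ t) • (θ • uy.1 t) + ψ t • uy.2)
          (((continuous_const.sub ψ.continuous).smul (uy.1.continuous.const_smul θ)).add
            (ψ.continuous.smul continuous_const)) with hΦdef
      have hΦapp : ∀ uy t, Φ uy t = (1 - ψ t) • (θ • uy.1 t) + ψ t • uy.2 :=
        fun uy t => rfl
      have hΦlip : LipschitzWith 2 Φ := by
        refine LipschitzWith.of_dist_le_mul fun a b => ?_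
        refine (ContinuousMap.dist_le (by positivity)).2 fun t => ?_
        rw [dist_eq_norm]
        have hab : Φ a t - Φ b t
            = (1 - ψ t) • (θ • (a.1 t - b.1 t)) + ψ t • (a.2 - b.2) := by
          rw [hΦapp, hΦapp]
          module
        rw [hab]
        have hψt := hψrange t
        have h1 : ‖(1 - ψ t) • (θ • (a.1 t - b.1 t))‖
            = (1 - ψ t) * (θ * ‖a.1 t - b.1 t‖) := by
          rw [norm_smul_of_nonneg (by linarith [hψt.2]), norm_smul_of_nonneg hθpos.le]
        have h2 : ‖ψ t • (a.2 - b.2)‖ = ψ t * ‖a.2 - b.2‖ :=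
          norm_smul_of_nonneg hψt.1 _
        have h3 : ‖a.1 t - b.1 t‖ ≤ dist a b := by
          rw [← dist_eq_norm]
          exact le_trans (le_trans (ContinuousMap.dist_apply_le_dist t)
            (le_max_left _ _)) (le_of_eq (Prod.dist_eq (x := a) (y := b)).symm)
        have h4 : ‖a.2 - b.2‖ ≤ dist a b := by
          rw [← dist_eq_norm]
          exact le_trans (le_max_right (dist a.1 b.1) _)
            (le_of_eq (Prod.dist_eq (x := a) (y := b)).symm)
        refine le_trans (norm_add_le _ _) ?_
        rw [h1, h2]
        push_cast
        have b1 : (1 - ψ t) * (θ * ‖a.1 t - b.1 t‖) ≤ θ * ‖a.1 t - b.1 t‖ :=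
          mul_le_of_le_one_left (mul_nonneg hθpos.le (norm_nonneg _)) (by linarith [hψt.1])
        have b2 : θ * ‖a.1 t - b.1 t‖ ≤ ‖a.1 t - b.1 t‖ :=
          mul_le_of_le_one_left (norm_nonneg _) hθ1
        have b3 : ψ t * ‖a.2 - b.2‖ ≤ ‖a.2 - b.2‖ :=
          mul_le_of_le_one_left (norm_nonneg _) hψt.2
        linarith [h3, h4]
      set S0 : Set Y := {y : Y | ∃ p q : M, p ≠ q ∧ y = (dist p q)⁻¹ • (G0 p - G0 q)} with hS0def
      have hcomp : IsCompact (Φ '' (closure S ×ˢ closure S0)) :=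
        (hFc.prod hG0c).image hΦlip.continuous
      have hsub : {y : C(K, Y) | ∃ p q : M, p ≠ q ∧ y = (dist p q)⁻¹ • (G p - G q)}
          ⊆ Φ '' (closure S ×ˢ closure S0) := by
        rintro y ⟨p, q, hpq, rfl⟩
        refine ⟨((dist p q)⁻¹ • (F p - F q), (dist p q)⁻¹ • (G0 p - G0 q)),
          ⟨subset_closure ⟨p, q, hpq, rfl⟩, subset_closure ⟨p, q, hpq, rfl⟩⟩, ?_⟩
        ext t
        rw [hΦapp]
        simp only [ContinuousMap.smul_apply, ContinuousMap.sub_apply]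
        rw [hGsub p q t]
        module
      exact hcomp.of_isClosed_subset isClosed_closure
        (closure_minimal hsub hcomp.isClosed)
    -- closeness
    have hdiff : ∀ p q : M, p ≠ q → ∀ t : K,
        ‖(G p t - F p t) - (G q t - F q t)‖ ≤ 4 * δ * dist p q := by
      intro p q hpq t
      have hψt := hψrange t
      have e0 : (G p t - F p t) - (G q t - F q t)
          = (G p t - G q t) - (F p t - F q t) := by abel
      rw [e0, hGsub p q t]
      have e1 : (1 - ψ t) • (θ • (F p t - F q t)) + ψ t • (G0 p - G0 q) - (F p t - F q t)
          = (1 - ψ t) • ((θ - 1) • (F p t - F q t))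
            + ψ t • ((G0 p - G0 q) - (F p t - F q t)) := by module
      rw [e1]
      have h1 : ‖(1 - ψ t) • ((θ - 1) • (F p t - F q t))‖
          = (1 - ψ t) * ((1 - θ) * ‖F p t - F q t‖) := by
        rw [norm_smul_of_nonneg (by linarith [hψt.2]), norm_smul, Real.norm_eq_abs,
          abs_of_nonpos (by linarith : θ - 1 ≤ 0)]
        ring_nf
      have h2 : ‖ψ t • ((G0 p - G0 q) - (F p t - F q t))‖
          = ψ t * ‖(G0 p - G0 q) - (F p t - F q t)‖ :=
        norm_smul_of_nonneg hψt.1 _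
      refine le_trans (norm_add_le _ _) ?_
      rw [h1, h2]
      have hfirst : (1 - θ) * ‖F p t - F q t‖ ≤ 2 * δ * dist p q := by
        have u1 := mul_le_mul_of_nonneg_left (hFL p q t) (by linarith : (0:ℝ) ≤ 1 - θ)
        have u2 := mul_le_mul_of_nonneg_right hθL' (dist_nonneg (x := p) (y := q))
        have u3 : (1 - θ) * (L * dist p q) = 1 - θ * L * dist p q ∨ True := Or.inr trivial
        have u4 : (1 - θ) * (L * dist p q) = (1 - θ) * L * dist p q := by ring
        linarith
      by_cases htU : t ∈ U
      · have hsec : ‖(G0 p - G0 q) - (F p t - F q t)‖ ≤ 2 * δ * dist p q := by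
          have e2 : (G0 p - G0 q) - (F p t - F q t)
              = ((G0 p - F0 p) - (G0 q - F0 q))
                - ((F p t - F q t) - (F p t0 - F q t0)) := by
            rw [hF0app, hF0app]; abel
          rw [e2]
          refine le_trans (norm_sub_le _ _) ?_
          have := hDle p q
          have := hU' p q hpq t htU
          linarith
        have v1 : (1 - ψ t) * ((1 - θ) * ‖F p t - F q t‖)
            ≤ (1 - θ) * ‖F p t - F q t‖ :=
          mul_le_of_le_one_left (mul_nonneg (by linarith) (norm_nonneg _))
            (by linarith [hψt.1])
        have v2 : ψ t * ‖(G0 p - G0 q) - (F p t - F q t)‖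
            ≤ ‖(G0 p - G0 q) - (F p t - F q t)‖ :=
          mul_le_of_le_one_left (norm_nonneg _) hψt.2
        linarith
      · have ha0 : ψ t = 0 := hψU t htU
        have m3 : (1 - (0:ℝ)) * ((1 - θ) * ‖F p t - F q t‖)
            + 0 * ‖(G0 p - G0 q) - (F p t - F q t)‖
            = (1 - θ) * ‖F p t - F q t‖ := by ring
        rw [ha0, m3]
        have w1 : (0:ℝ) ≤ δ * dist p q := mul_nonneg hδpos.le dist_nonneg
        linarith
    have hcloseG : lipNorm (fun x => G x - F x) < ε := by
      have hle : lipNorm (fun x => G x - F x) ≤ 4 * δ := by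
        refine lipNorm_le (by linarith) fun p q hpq => ?_
        refine (ContinuousMap.norm_le _
          (mul_nonneg (by linarith : (0:ℝ) ≤ 4 * δ) dist_nonneg)).2 fun t => ?_
        simp only [ContinuousMap.sub_apply]
        exact hdiff p q hpq t
      linarith
    exact ⟨G, ⟨⟨CF + CG, hGlip⟩, hGz⟩, hGc, ⟨r, s, hrs, by rw [hGnorm]; exact hGrs⟩, hcloseG⟩
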